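/- arXiv:2305.08162 — 3 statements merged into one kernel-verified Lean document; each statement's English description precedes it below -/
import Mathlib

section
/- In ℂ[x,y], the intersection over all pairs (ℓ_1, ℓ_2) of linearly independent linear forms of the ideals (ℓ_1^m, ℓ_2^m) equals the ideal (x,y)^{2m-1}. -/
/-!
Write `𝔪 = (x, y)`. Two independent linear forms span the same space of linear forms as `x, y`,
so `(ℓ₁, ℓ₂) = 𝔪` and `𝔪 ^ (2m-1) = (ℓ₁, ℓ₂) ^ (2m-1) ⊆ (ℓ₁ ^ m, ℓ₂ ^ m)`, since a product of
`2m - 1` factors `ℓ₁` or `ℓ₂` contains one of them `m` times.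

Conversely the intersection is stable under linear changes of coordinates. So if `f` lies in it,
then for every `t` the sheared polynomial `f(x + t y, y)` lies in `(x ^ m, y ^ m)`, and its
coefficient of `x ^ i * y ^ j` with `i, j < m` vanishes as a polynomial in `t`. The coefficient
of `t ^ r` in it is `(i + r).choose i` times the coefficient of `x ^ (i + r) * y ^ (j - r)`
in `f`; this kills every monomial `x ^ u * y ^ v` of `f` of degree `< 2m - 1` with `v < m`, and
swapping `x` and `y` handles `u < m`.
-/

open MvPolynomial

theorem Ideal.sup_pow_add_add_one_le_pow_sup_pow {R : Type*} [CommSemiring R] (I J : Ideal R)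
    (n k : ℕ) :
    (I ⊔ J) ^ (n + k + 1) ≤ I ^ (n + 1) ⊔ J ^ (k + 1) := by
  rw [← Ideal.add_eq_sup, ← Ideal.add_eq_sup, add_pow, Ideal.sum_eq_sup]
  refine Finset.sup_le fun i hi => ?_
  by_cases hn : n + 1 ≤ i
  · exact Ideal.mul_le_left.trans (Ideal.mul_le_left.trans
      ((Ideal.pow_le_pow_right hn).trans le_sup_left))
  · refine Ideal.mul_le_left.trans (Ideal.mul_le_right.trans
      ((Ideal.pow_le_pow_right ?_).trans le_sup_right))
    rw [Finset.mem_range] at hi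
    omega

namespace MvPolynomial

theorem idealOfVars_fin_two (R : Type*) [CommSemiring R] :
    idealOfVars (Fin 2) R = Ideal.span {X 0, X 1} := by
  rw [idealOfVars]
  congr 1
  ext p
  simp [Fin.exists_fin_two, eq_comm]

theorem coeff_eq_zero_of_mem_span_X_pow_pair {R σ : Type*} [CommSemiring R] {a b : σ} {m : ℕ}
    {g : MvPolynomial σ R} (hg : g ∈ Ideal.span {X a ^ m, X b ^ m}) {d : σ →₀ ℕ}
    (ha : d a < m) (hb : d b < m) : g.coeff d = 0 := by
  obtain ⟨p, q, rfl⟩ := Ideal.mem_span_pair.mp hg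
  rw [coeff_add, X_pow_eq_monomial, X_pow_eq_monomial, coeff_mul_monomial',
    coeff_mul_monomial', if_neg, if_neg, add_zero]
  · rw [Finsupp.single_le_iff]; omega
  · rw [Finsupp.single_le_iff]; omega

theorem idealOfVars_le_span_range {K σ ι : Type*} [Field K] [Fintype σ] [Fintype ι]
    {ℓ : ι → MvPolynomial σ K} (hℓ : ∀ i, (ℓ i).IsHomogeneous 1) (hli : LinearIndependent K ℓ)
    (hcard : Fintype.card ι = Fintype.card σ) : idealOfVars σ K ≤ Ideal.span (Set.range ℓ) := by
  have hspan : Submodule.span K (Set.range ℓ) = Submodule.span K (Set.range X) := by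
    have := FiniteDimensional.span_of_finite K (Set.finite_range (X : σ → MvPolynomial σ K))
    refine Submodule.eq_of_le_of_finrank_eq ?_ ?_
    · rw [← homogeneousSubmodule_one_eq_span_X, Submodule.span_le]
      rintro _ ⟨i, rfl⟩
      exact hℓ i
    · rw [finrank_span_eq_card hli, finrank_span_eq_card (linearIndependent_X σ K), hcard]
  rw [Ideal.span_le]
  rintro _ ⟨i, rfl⟩
  exact Submodule.span_le_restrictScalars K _ _ (hspan ▸ Submodule.subset_span ⟨i, rfl⟩)

end MvPolynomial

noncomputable section

namespace MSquares

-- The ideal of the schematic union of all `m`-squares at the origin.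
def squaresMeet (σ K : Type*) [Field K] (m : ℕ) : Ideal (MvPolynomial σ K) :=
  ⨅ (ℓ₁ : MvPolynomial σ K) (ℓ₂ : MvPolynomial σ K)
      (_ : ℓ₁.IsHomogeneous 1) (_ : ℓ₂.IsHomogeneous 1)
      (_ : LinearIndependent K ![ℓ₁, ℓ₂]),
      Ideal.span {ℓ₁ ^ m, ℓ₂ ^ m}

theorem mem_squaresMeet {σ K : Type*} [Field K] {m : ℕ} {f : MvPolynomial σ K} :
    f ∈ squaresMeet σ K m ↔ ∀ ℓ₁ ℓ₂ : MvPolynomial σ K, ℓ₁.IsHomogeneous 1 →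
      ℓ₂.IsHomogeneous 1 → LinearIndependent K ![ℓ₁, ℓ₂] →
      f ∈ Ideal.span {ℓ₁ ^ m, ℓ₂ ^ m} := by
  simp only [squaresMeet, Submodule.mem_iInf]

section Shear

variable {R S : Type*} [CommSemiring R] [CommSemiring S]

def expPair (i j : ℕ) : Fin 2 →₀ ℕ := Finsupp.single 0 i + Finsupp.single 1 j

@[simp] theorem expPair_apply_zero (i j : ℕ) : expPair i j 0 = i := by simp [expPair]

@[simp] theorem expPair_apply_one (i j : ℕ) : expPair i j 1 = j := by simp [expPair]

theorem eq_expPair (d : Fin 2 →₀ ℕ) : d = expPair (d 0) (d 1) := by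
  ext a; fin_cases a <;> simp

theorem expPair_inj {i j k l : ℕ} : expPair i j = expPair k l ↔ i = k ∧ j = l := by
  refine ⟨fun h => ⟨by simpa using congr($h 0), by simpa using congr($h 1)⟩, ?_⟩
  rintro ⟨rfl, rfl⟩
  rfl

theorem monomial_expPair (i j : ℕ) (c : R) :
    monomial (expPair i j) c = C c * X 0 ^ i * X 1 ^ j := by
  rw [X_pow_eq_monomial, X_pow_eq_monomial, C_mul_monomial, monomial_mul]
  simp [expPair]

theorem coeff_expPair_C_mul_X_pow_mul_X_pow (a : R) (k l i j : ℕ) :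
    coeff (expPair i j) (C a * X 0 ^ k * X 1 ^ l) = if k = i ∧ l = j then a else 0 := by
  simp only [← monomial_expPair, coeff_monomial, expPair_inj]

theorem coeff_rename_swap (f : MvPolynomial (Fin 2) R) (u v : ℕ) :
    (rename (Equiv.swap 0 1) f).coeff (expPair v u) = f.coeff (expPair u v) := by
  rw [← coeff_rename_mapDomain _ (Equiv.injective (Equiv.swap (0 : Fin 2) 1)) f]
  congr 1
  simp [expPair, Finsupp.mapDomain_add, add_comm]

def shear (a : R) : MvPolynomial (Fin 2) R →ₐ[R] MvPolynomial (Fin 2) R :=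
  aeval ![X 0 + C a * X 1, X 1]

@[simp] theorem shear_X_zero (a : R) : shear a (X 0) = X 0 + C a * X 1 := by simp [shear]

@[simp] theorem shear_X_one (a : R) : shear a (X 1) = X 1 := by simp [shear]

theorem shear_zero : shear (0 : R) = AlgHom.id R _ := by
  refine algHom_ext fun i => ?_
  fin_cases i <;> simp

theorem shear_comp_shear (a b : R) : (shear a).comp (shear b) = shear (a + b) := by
  refine algHom_ext fun i => ?_
  fin_cases i <;> simp [map_add, add_mul, add_assoc]

def shearEquiv {R : Type*} [CommRing R] (a : R) :
    MvPolynomial (Fin 2) R ≃ₐ[R] MvPolynomial (Fin 2) R :=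
  AlgEquiv.ofAlgHom (shear a) (shear (-a))
    (by rw [shear_comp_shear, add_neg_cancel, shear_zero])
    (by rw [shear_comp_shear, neg_add_cancel, shear_zero])

theorem isHomogeneous_shear {ℓ : MvPolynomial (Fin 2) R} {n : ℕ} (hℓ : ℓ.IsHomogeneous n)
    (a : R) : (shear a ℓ).IsHomogeneous n := by
  have h := hℓ.aeval ![(X 0 + C a * X 1 : MvPolynomial (Fin 2) R), X 1] (n := 1) fun i => by
    fin_cases i
    exacts [(isHomogeneous_X R 0).add ((isHomogeneous_X R 1).C_mul a), isHomogeneous_X R 1]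
  rw [one_mul] at h
  exact h

theorem map_shear (φ : R →+* S) (a : R) (p : MvPolynomial (Fin 2) R) :
    map φ (shear a p) = shear (φ a) (map φ p) := by
  induction p using MvPolynomial.induction_on with
  | C c => simp [shear]
  | add p q hp hq => simp only [map_add, hp, hq]
  | mul_X p i hp => fin_cases i <;> simp [hp]

theorem coeff_shear_monomial (a c : R) (p q i j : ℕ) :
    coeff (expPair i j) (shear a (monomial (expPair p q) c)) =
      if i ≤ p ∧ p + q = i + j then c * p.choose i * a ^ (p - i) else 0 := by
  have hexpand : shear a (monomial (expPair p q) c) = ∑ k ∈ Finset.range (p + 1),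
      C (c * p.choose k * a ^ (p - k)) * X 0 ^ k * X 1 ^ (p - k + q) := by
    rw [monomial_expPair, map_mul, map_mul, map_pow, map_pow, shear_X_zero, shear_X_one,
      add_pow, Finset.mul_sum, Finset.sum_mul]
    refine Finset.sum_congr rfl fun k _ => ?_
    simp only [shear, algHom_C, map_mul, map_pow, map_natCast, algebraMap_eq]
    ring
  rw [hexpand, coeff_sum]
  simp only [coeff_expPair_C_mul_X_pow_mul_X_pow, ite_and, Finset.sum_ite_eq', Finset.mem_range]
  split_ifs <;> first | rfl | omega

theorem coeff_coeff_shear_X (f : MvPolynomial (Fin 2) R) (i j r : ℕ) :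
    ((shear Polynomial.X (map Polynomial.C f)).coeff (expPair i (j + r))).coeff r =
      (i + r).choose i * f.coeff (expPair (i + r) j) := by
  induction f using MvPolynomial.induction_on' with
  | monomial d c =>
    rw [eq_expPair d, map_monomial, coeff_shear_monomial]
    simp only [coeff_monomial, expPair_inj, ← Polynomial.C_eq_natCast, ← Polynomial.C_mul]
    generalize d 0 = p, d 1 = q
    split_ifs with h1 h2 h2
    · obtain ⟨rfl, rfl⟩ := h2
      rw [Nat.add_sub_cancel_left, Polynomial.coeff_C_mul_X_pow, if_pos rfl, mul_comm]
    · rw [Polynomial.coeff_C_mul_X_pow, if_neg (by omega), mul_zero]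
    · exact absurd ⟨by omega, by omega⟩ h1
    · rw [Polynomial.coeff_zero, mul_zero]
  | add p q hp hq => simp only [map_add, coeff_add, Polynomial.coeff_add, hp, hq, mul_add]

theorem eval_coeff_shear_X (f : MvPolynomial (Fin 2) R) (d : Fin 2 →₀ ℕ) (s : R) :
    ((shear Polynomial.X (map Polynomial.C f)).coeff d).eval s = (shear s f).coeff d := by
  have hevalC : (Polynomial.evalRingHom s).comp Polynomial.C = RingHom.id R :=
    RingHom.ext fun c => Polynomial.eval_C
  rw [← Polynomial.coe_evalRingHom, ← coeff_map, map_shear, map_map, hevalC, map_id,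
    Polynomial.coe_evalRingHom, Polynomial.eval_X]

end Shear

section SquaresMeet

variable {K : Type*} [Field K]

theorem idealOfVars_pow_le_span_pow_pair {ℓ₁ ℓ₂ : MvPolynomial (Fin 2) K}
    (h₁ : ℓ₁.IsHomogeneous 1) (h₂ : ℓ₂.IsHomogeneous 1) (hli : LinearIndependent K ![ℓ₁, ℓ₂])
    (m : ℕ) : idealOfVars (Fin 2) K ^ (2 * m - 1) ≤ Ideal.span {ℓ₁ ^ m, ℓ₂ ^ m} := by
  obtain _ | m := m
  · simp
  have hvars : idealOfVars (Fin 2) K ≤ Ideal.span {ℓ₁} ⊔ Ideal.span {ℓ₂} := by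
    rw [← Ideal.span_insert, ← Matrix.range_cons_cons_empty ℓ₁ ℓ₂ ![]]
    exact idealOfVars_le_span_range (Fin.forall_fin_two.2 ⟨h₁, h₂⟩) hli rfl
  calc idealOfVars (Fin 2) K ^ (2 * (m + 1) - 1)
      ≤ (Ideal.span {ℓ₁} ⊔ Ideal.span {ℓ₂}) ^ (m + m + 1) := by
        rw [show 2 * (m + 1) - 1 = m + m + 1 by omega]
        exact Ideal.pow_right_mono hvars _
    _ ≤ Ideal.span {ℓ₁} ^ (m + 1) ⊔ Ideal.span {ℓ₂} ^ (m + 1) :=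
        Ideal.sup_pow_add_add_one_le_pow_sup_pow _ _ _ _
    _ = Ideal.span {ℓ₁ ^ (m + 1), ℓ₂ ^ (m + 1)} := by
        rw [Ideal.span_singleton_pow, Ideal.span_singleton_pow, ← Ideal.span_insert]

theorem idealOfVars_pow_le_squaresMeet (m : ℕ) :
    idealOfVars (Fin 2) K ^ (2 * m - 1) ≤ squaresMeet (Fin 2) K m :=
  fun _ hf => mem_squaresMeet.mpr fun _ _ h₁ h₂ hli =>
    idealOfVars_pow_le_span_pow_pair h₁ h₂ hli m hf

theorem squaresMeet_le_span_X_pow_pair (m : ℕ) :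
    squaresMeet (Fin 2) K m ≤ Ideal.span {X 0 ^ m, X 1 ^ m} := by
  refine fun f hf => mem_squaresMeet.mp hf _ _ (isHomogeneous_X K 0) (isHomogeneous_X K 1) ?_
  rw [LinearIndependent.pair_iff]
  exact fun s t h => ⟨by simpa using congr(coeff (Finsupp.single 0 1) $h),
    by simpa using congr(coeff (Finsupp.single 1 1) $h)⟩

theorem map_mem_squaresMeet {σ : Type*} {m : ℕ} (e : MvPolynomial σ K ≃ₐ[K] MvPolynomial σ K)
    (he : ∀ ℓ : MvPolynomial σ K, ℓ.IsHomogeneous 1 → (e.symm ℓ).IsHomogeneous 1)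
    {f : MvPolynomial σ K} (hf : f ∈ squaresMeet σ K m) : e f ∈ squaresMeet σ K m := by
  rw [mem_squaresMeet] at hf ⊢
  intro ℓ₁ ℓ₂ h₁ h₂ hli
  have hli' : LinearIndependent K ![e.symm ℓ₁, e.symm ℓ₂] := by
    rw [LinearIndependent.pair_iff] at hli ⊢
    exact fun s t hst => hli s t (e.symm.injective (by simpa using hst))
  obtain ⟨p, q, rfl⟩ := Ideal.mem_span_pair.mp (hf _ _ (he ℓ₁ h₁) (he ℓ₂ h₂) hli')
  exact Ideal.mem_span_pair.mpr ⟨e p, e q, by simp⟩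

theorem rename_swap_mem_squaresMeet {m : ℕ} {f : MvPolynomial (Fin 2) K}
    (hf : f ∈ squaresMeet (Fin 2) K m) :
    rename (Equiv.swap 0 1) f ∈ squaresMeet (Fin 2) K m :=
  map_mem_squaresMeet (renameEquiv K (Equiv.swap 0 1)) (fun _ hℓ => hℓ.rename_isHomogeneous) hf

variable [CharZero K]

theorem coeff_eq_zero_of_mem_squaresMeet {m : ℕ} {f : MvPolynomial (Fin 2) K}
    (hf : f ∈ squaresMeet (Fin 2) K m) {u v : ℕ} (hv : v < m) (huv : u + v < 2 * m - 1) :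
    f.coeff (expPair u v) = 0 := by
  -- `x ^ u * y ^ v` is the only monomial of `f` contributing `t ^ r * x ^ i * y ^ (v + r)` to
  -- `f (x + t y, y)`, and this choice makes `i, v + r < m`.
  set i := min u (m - 1)
  set r := u - i
  have hshear (s : K) {k l : ℕ} (hk : k < m) (hl : l < m) :
      (shear s f).coeff (expPair k l) = 0 :=
    coeff_eq_zero_of_mem_span_X_pow_pair (squaresMeet_le_span_X_pow_pair m
      (map_mem_squaresMeet (shearEquiv s) (fun ℓ hℓ => isHomogeneous_shear hℓ (-s)) hf))
      (by simpa) (by simpa)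
  have hgeneric : (shear Polynomial.X (map Polynomial.C f)).coeff (expPair i (v + r)) = 0 :=
    Polynomial.funext fun s => by
      rw [eval_coeff_shear_X, hshear s (by omega) (by omega), Polynomial.eval_zero]
  have hcoeff := coeff_coeff_shear_X f i v r
  rw [hgeneric, Polynomial.coeff_zero, show i + r = u by omega] at hcoeff
  exact (mul_eq_zero.mp hcoeff.symm).resolve_left
    (Nat.cast_ne_zero.mpr (Nat.choose_pos (by omega)).ne')

theorem squaresMeet_le_idealOfVars_pow (m : ℕ) :
    squaresMeet (Fin 2) K m ≤ idealOfVars (Fin 2) K ^ (2 * m - 1) := by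
  intro f hf
  rw [mem_pow_idealOfVars_iff']
  intro d hd
  rw [Finsupp.degree_eq_sum, Fin.sum_univ_two] at hd
  rw [eq_expPair d]
  rcases lt_or_ge (d 1) m with hv | hv
  · exact coeff_eq_zero_of_mem_squaresMeet hf hv hd
  · rw [← coeff_rename_swap]
    exact coeff_eq_zero_of_mem_squaresMeet (rename_swap_mem_squaresMeet hf) (by omega) (by omega)

end SquaresMeet

end MSquares

end

theorem stmt_4_general (m : ℕ) :
    (⨅ (ℓ₁ : MvPolynomial (Fin 2) ℂ) (ℓ₂ : MvPolynomial (Fin 2) ℂ)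
        (_ : ℓ₁.IsHomogeneous 1) (_ : ℓ₂.IsHomogeneous 1)
        (_ : LinearIndependent ℂ ![ℓ₁, ℓ₂]),
        Ideal.span {ℓ₁ ^ m, ℓ₂ ^ m}) =
      (Ideal.span {(X 0 : MvPolynomial (Fin 2) ℂ), X 1}) ^ (2 * m - 1) := by
  rw [← idealOfVars_fin_two]
  exact le_antisymm (MSquares.squaresMeet_le_idealOfVars_pow m)
    (MSquares.idealOfVars_pow_le_squaresMeet m)

theorem stmt_4 (m : ℕ) (hm : 1 ≤ m) :
    (⨅ (ℓ₁ : MvPolynomial (Fin 2) ℂ) (ℓ₂ : MvPolynomial (Fin 2) ℂ)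
        (_ : ℓ₁.IsHomogeneous 1) (_ : ℓ₂.IsHomogeneous 1)
        (_ : LinearIndependent ℂ ![ℓ₁, ℓ₂]),
        Ideal.span {ℓ₁ ^ m, ℓ₂ ^ m}) =
      (Ideal.span {(X 0 : MvPolynomial (Fin 2) ℂ), X 1}) ^ (2 * m - 1) :=
  stmt_4_general m
end

section
/- In ℂ[x,y], for m = 2, the intersection of the ideals (ℓ_1^2, ℓ_2^2) over all pairs of distinct 'perpendicular' linear forms ℓ_1 = a x - b y, ℓ_2 = b x + a y with (a,b) ≠ (0,0) and a^2 + b^2 ≠ 0 equals the ideal (x^2 + y^2, x^3, x^2 y). -/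
open MvPolynomial

namespace Stmt5Aux

abbrev R := MvPolynomial (Fin 2) ℂ

lemma x01 : (X 0 * X 1 : R) = monomial (Finsupp.single 0 1 + Finsupp.single 1 1) 1 := by
  rw [← pow_one (X 0 : R), ← pow_one (X 1 : R), X_pow_eq_monomial, X_pow_eq_monomial,
    monomial_mul, one_mul]

lemma cA (q : R) : coeff (Finsupp.single 0 2) (q * X 0 ^ 2) = constantCoeff q := by
  rw [X_pow_eq_monomial, coeff_mul_monomial', if_pos le_rfl]
  simp [constantCoeff_eq]

lemma cB (q : R) : coeff (Finsupp.single 1 2) (q * X 0 ^ 2) = 0 := by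
  rw [X_pow_eq_monomial, coeff_mul_monomial', if_neg]
  simp [Finsupp.single_le_iff, Finsupp.single_apply]

lemma cC (q : R) : coeff (Finsupp.single 0 2) (q * X 1 ^ 2) = 0 := by
  rw [X_pow_eq_monomial, coeff_mul_monomial', if_neg]
  simp [Finsupp.single_le_iff, Finsupp.single_apply]

lemma cD (q : R) : coeff (Finsupp.single 1 2) (q * X 1 ^ 2) = constantCoeff q := by
  rw [X_pow_eq_monomial, coeff_mul_monomial', if_pos le_rfl]
  simp [constantCoeff_eq]

lemma cE (q : R) : coeff (Finsupp.single 0 2) (q * (X 0 * X 1)) = 0 := by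
  rw [x01, coeff_mul_monomial', if_neg]
  intro h
  have := h 1
  simp [Finsupp.single_apply] at this

lemma cF (q : R) : coeff (Finsupp.single 1 2) (q * (X 0 * X 1)) = 0 := by
  rw [x01, coeff_mul_monomial', if_neg]
  intro h
  have := h 0
  simp [Finsupp.single_apply] at this

lemma sub_const_mem (q : R) :
    q - C (constantCoeff q) ∈ Ideal.span {(X 0 : R), X 1} := by
  induction q using MvPolynomial.induction_on with
  | C a => simp
  | add p q hp hq =>
      have h := add_mem hp hq
      have : p + q - C (constantCoeff (p + q)) =
          (p - C (constantCoeff p)) + (q - C (constantCoeff q)) := by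
        rw [map_add, C_add]; ring
      rw [this]; exact h
  | mul_X p n hp =>
      have h0 : constantCoeff (p * X n) = 0 := by simp
      rw [h0, map_zero, sub_zero]
      refine Ideal.mul_mem_left _ p (Ideal.subset_span ?_)
      fin_cases n <;> simp

end Stmt5Aux

open Stmt5Aux in
theorem stmt_5 :
    (⨅ (a : ℂ) (b : ℂ) (_ : a ^ 2 + b ^ 2 ≠ 0)
        (_ : (C a * X 0 - C b * X 1 : MvPolynomial (Fin 2) ℂ) ≠ C b * X 0 + C a * X 1),
        Ideal.span {(C a * X 0 - C b * X 1 : MvPolynomial (Fin 2) ℂ) ^ 2,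
          (C b * X 0 + C a * X 1) ^ 2}) =
      Ideal.span {(X 0 : MvPolynomial (Fin 2) ℂ) ^ 2 + X 1 ^ 2, X 0 ^ 3, X 0 ^ 2 * X 1} := by
  apply le_antisymm
  · -- hard direction: inf ≤ J, using (a,b) = (1,0) and (1,1)
    have hne1 : (C 1 * X 0 - C 0 * X 1 : R) ≠ C 0 * X 0 + C 1 * X 1 := by
      simp only [C_1, C_0, one_mul, zero_mul, sub_zero, zero_add]
      intro h
      have := congrArg (eval (fun i : Fin 2 => if i = 0 then (1:ℂ) else 0)) h
      simp at this
    have hne2 : (C 1 * X 0 - C 1 * X 1 : R) ≠ C 1 * X 0 + C 1 * X 1 := by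
      simp only [C_1, one_mul]
      intro h
      have := congrArg (eval (fun i : Fin 2 => if i = 0 then (0:ℂ) else 1)) h
      norm_num at this
    have h1 : (⨅ (a : ℂ) (b : ℂ) (_ : a ^ 2 + b ^ 2 ≠ 0)
        (_ : (C a * X 0 - C b * X 1 : R) ≠ C b * X 0 + C a * X 1),
        Ideal.span {(C a * X 0 - C b * X 1 : R) ^ 2, (C b * X 0 + C a * X 1) ^ 2}) ≤
        Ideal.span {(X 0 : R) ^ 2, (X 1 : R) ^ 2} := by
      refine le_trans (iInf_le_of_le 1 (iInf_le_of_le 0 (iInf_le_of_le (by norm_num)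
        (iInf_le _ hne1)))) ?_
      simp
    have h2 : (⨅ (a : ℂ) (b : ℂ) (_ : a ^ 2 + b ^ 2 ≠ 0)
        (_ : (C a * X 0 - C b * X 1 : R) ≠ C b * X 0 + C a * X 1),
        Ideal.span {(C a * X 0 - C b * X 1 : R) ^ 2, (C b * X 0 + C a * X 1) ^ 2}) ≤
        Ideal.span {((X 0 : R) - X 1) ^ 2, ((X 0 : R) + X 1) ^ 2} := by
      refine le_trans (iInf_le_of_le 1 (iInf_le_of_le 1 (iInf_le_of_le (by norm_num)
        (iInf_le _ hne2)))) ?_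
      simp
    intro p hp
    obtain ⟨f, g, E1⟩ := Ideal.mem_span_pair.mp (h1 hp)
    obtain ⟨h, k, E2⟩ := Ideal.mem_span_pair.mp (h2 hp)
    have E : f * X 0 ^ 2 + g * X 1 ^ 2 =
        (h + k) * X 0 ^ 2 + (h + k) * X 1 ^ 2 + (2 * k - 2 * h) * (X 0 * X 1) := by
      linear_combination E1 - E2
    have hA := congrArg (coeff (Finsupp.single (0 : Fin 2) 2)) E
    have hB := congrArg (coeff (Finsupp.single (1 : Fin 2) 2)) E
    simp only [coeff_add, cA, cB, cC, cD, cE, cF, add_zero, zero_add] at hA hB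
    have hfg : constantCoeff f = constantCoeff g := by rw [hA, hB]
    obtain ⟨r, s, hr⟩ := Ideal.mem_span_pair.mp (sub_const_mem f)
    obtain ⟨t, u, ht⟩ := Ideal.mem_span_pair.mp (sub_const_mem g)
    have key : p = (C (constantCoeff f) + t * X 0 + u * X 1) * (X 0 ^ 2 + X 1 ^ 2)
        + (r - t) * X 0 ^ 3 + (s - u) * (X 0 ^ 2 * X 1) := by
      rw [hfg] at hr ⊢
      linear_combination - E1 - (X 0 ^ 2 : R) * hr - (X 1 ^ 2 : R) * ht
    rw [key]
    refine add_mem (add_mem ?_ ?_) ?_ <;>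
      exact Ideal.mul_mem_left _ _ (Ideal.subset_span (by simp))
  · -- easy direction: J ≤ each span
    simp only [le_iInf_iff]
    intro a b hd _
    have hCd : (C (a ^ 2 + b ^ 2) : R) = C a ^ 2 + C b ^ 2 := by
      rw [map_add, map_pow, map_pow]
    have hC2 : (C ((a ^ 2 + b ^ 2)⁻¹) : R) * (C a ^ 2 + C b ^ 2) = 1 := by
      rw [← hCd, ← C_mul, inv_mul_cancel₀ hd, C_1]
    have hC3 : (C ((a ^ 2 + b ^ 2)⁻¹) : R) ^ 3 * (C a ^ 2 + C b ^ 2) ^ 3 = 1 := by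
      rw [← mul_pow, hC2, one_pow]
    rw [Ideal.span_le]
    rintro q hq
    simp only [Set.mem_insert_iff, Set.mem_singleton_iff] at hq
    rcases hq with rfl | rfl | rfl
    · exact Ideal.mem_span_pair.mpr ⟨C ((a ^ 2 + b ^ 2)⁻¹), C ((a ^ 2 + b ^ 2)⁻¹), by
        linear_combination ((X 0 : R) ^ 2 + X 1 ^ 2) * hC2⟩
    · exact Ideal.mem_span_pair.mpr
        ⟨C ((a ^ 2 + b ^ 2)⁻¹) ^ 3 * ((C a ^ 4 + 3 * C a ^ 2 * C b ^ 2) * X 0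
            + 2 * C a ^ 3 * C b * X 1),
         C ((a ^ 2 + b ^ 2)⁻¹) ^ 3 * ((3 * C a ^ 2 * C b ^ 2 + C b ^ 4) * X 0
            - 2 * C a * C b ^ 3 * X 1), by
        linear_combination ((X 0 : R) ^ 3) * hC3⟩
    · exact Ideal.mem_span_pair.mpr
        ⟨C ((a ^ 2 + b ^ 2)⁻¹) ^ 3 * (-2 * C a * C b ^ 3 * X 0
            + (C a ^ 4 - C a ^ 2 * C b ^ 2) * X 1),
         C ((a ^ 2 + b ^ 2)⁻¹) ^ 3 * (2 * C a ^ 3 * C b * X 0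
            + (C b ^ 4 - C a ^ 2 * C b ^ 2) * X 1), by
        linear_combination ((X 0 : R) ^ 2 * X 1) * hC3⟩
end

section
/- In ℂ[x,y], the quotient of ℂ[x,y] by the ideal (x^2+y^2, x^3, x^2y) has ℂ-vector space dimension 5. -/
/-! The classes of `1, x, y, xy, y²` form a basis of the quotient. They span it because multiplying
any of them by `x` or `y` gives, modulo the ideal, `0` or `±` one of them: `x² ≡ -y²`, while `x²y`,
`xy² = x(x² + y²) - x³` and `y³ = y(x² + y²) - x²y` lie in the ideal. They are independent because
the linear map recording the coefficients of `1, x, y, xy` and the coefficient of `y²` minus that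
of `x²` kills the ideal and sends the five monomials to the standard basis of `K⁵`. -/

open MvPolynomial

theorem Submodule.span_eq_top_of_mul_mem {R A : Type*} [CommSemiring R] [Semiring A] [Algebra R A]
    {s T : Set A} (hs : Algebra.adjoin R s = ⊤) (h1 : 1 ∈ span R T)
    (hmul : ∀ g ∈ s, ∀ t ∈ T, g * t ∈ span R T) : span R T = ⊤ := by
  set M := span R T
  have hgen : ∀ g ∈ s, ∀ m ∈ M, g * m ∈ M := fun g hg m hm => by
    induction hm using Submodule.span_induction with
    | mem t ht => exact hmul g hg t ht
    | zero => rw [mul_zero]; exact M.zero_mem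
    | add m m' _ _ hm hm' => rw [mul_add]; exact M.add_mem hm hm'
    | smul c m _ hm => rw [mul_smul_comm]; exact M.smul_mem c hm
  have hadjoin : ∀ a ∈ Algebra.adjoin R s, ∀ m ∈ M, a * m ∈ M := fun a ha => by
    induction ha using Algebra.adjoin_induction with
    | mem g hg => exact hgen g hg
    | algebraMap r => exact fun m hm => by simpa [← Algebra.smul_def] using M.smul_mem r hm
    | add a b _ _ ha hb => exact fun m hm => by simpa [add_mul] using M.add_mem (ha m hm) (hb m hm)
    | mul a b _ _ ha hb => exact fun m hm => by simpa [mul_assoc] using ha _ (hb m hm)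
  refine eq_top_iff.mpr fun a _ => ?_
  simpa using hadjoin a (hs ▸ Algebra.mem_top) 1 h1

theorem MvPolynomial.adjoin_range_mk_X_eq_top {σ R : Type*} [CommRing R]
    (I : Ideal (MvPolynomial σ R)) :
    Algebra.adjoin R (Set.range fun i => Ideal.Quotient.mk I (X i)) = ⊤ := by
  have h := Algebra.adjoin_image R (Ideal.Quotient.mkₐ R I) (Set.range X)
  rwa [adjoin_range_X, Algebra.map_top,
    (Ideal.Quotient.mkₐ R I).range_eq_top.mpr (Ideal.Quotient.mkₐ_surjective R I),
    ← Set.range_comp] at h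

namespace SquareSum

variable (K : Type*) [CommRing K]

noncomputable abbrev ideal : Ideal (MvPolynomial (Fin 2) K) :=
  Ideal.span {X 0 ^ 2 + X 1 ^ 2, X 0 ^ 3, X 0 ^ 2 * X 1}

noncomputable def stdMonomial : Fin 5 → MvPolynomial (Fin 2) K :=
  ![1, X 0, X 1, X 0 * X 1, X 1 ^ 2]

noncomputable def coeffFunctional : MvPolynomial (Fin 2) K →ₗ[K] (Fin 5 → K) :=
  LinearMap.pi ![lcoeff K 0, lcoeff K (.single 0 1), lcoeff K (.single 1 1),
    lcoeff K (.single 0 1 + .single 1 1), lcoeff K (.single 1 2) - lcoeff K (.single 0 2)]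

variable {K}

theorem coeffFunctional_stdMonomial (j : Fin 5) :
    coeffFunctional K (stdMonomial K j) = Pi.single j 1 := by
  funext i
  fin_cases j <;> fin_cases i <;>
    simp [coeffFunctional, stdMonomial, coeff_X, coeff_X_pow, coeff_one, coeff_mul_X',
      Finsupp.ext_iff, Fin.forall_fin_two, Finsupp.single_apply]

theorem coeffFunctional_mul_eq_zero_of_mem {p : MvPolynomial (Fin 2) K} (hp : p ∈ ideal K)
    (f : MvPolynomial (Fin 2) K) : coeffFunctional K (f * p) = 0 := by
  induction hp using Submodule.span_induction generalizing f with
  | mem g hg =>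
    funext i
    rcases hg with rfl | rfl | rfl <;> fin_cases i <;>
      simp [coeffFunctional, X, monomial_pow, monomial_mul, mul_add, coeff_mul_monomial',
        Finsupp.le_def, Fin.forall_fin_two]
  | zero => simp
  | add a b _ _ ha hb => simp [mul_add, ha, hb]
  | smul r a _ ha => simpa [mul_assoc] using ha (f * r)

theorem linearIndependent_mk_stdMonomial :
    LinearIndependent K fun j => Ideal.Quotient.mkₐ K (ideal K) (stdMonomial K j) := by
  refine Fintype.linearIndependent_iff.mpr fun c hc => ?_
  have hmem : ∑ j, c j • stdMonomial K j ∈ ideal K := by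
    rw [← Ideal.Quotient.eq_zero_iff_mem, ← Ideal.Quotient.mkₐ_eq_mk K, map_sum]
    simpa using hc
  have hcoeff := coeffFunctional_mul_eq_zero_of_mem hmem 1
  simp only [one_mul, map_sum, map_smul, coeffFunctional_stdMonomial] at hcoeff
  simpa [Pi.single_apply] using congrFun hcoeff

theorem span_mk_stdMonomial_eq_top :
    Submodule.span K (Set.range fun j => Ideal.Quotient.mkₐ K (ideal K) (stdMonomial K j)) = ⊤ := by
  set x := Ideal.Quotient.mk (ideal K) (X 0)
  set y := Ideal.Quotient.mk (ideal K) (X 1)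
  obtain ⟨hsq, hx3, hx2y⟩ : x ^ 2 + y ^ 2 = 0 ∧ x ^ 3 = 0 ∧ x ^ 2 * y = 0 := by
    simp only [x, y, ← map_pow, ← map_mul, ← map_add, Ideal.Quotient.eq_zero_iff_mem]
    exact ⟨Ideal.subset_span (by simp), Ideal.subset_span (by simp), Ideal.subset_span (by simp)⟩
  have hstd : (fun j => Ideal.Quotient.mkₐ K (ideal K) (stdMonomial K j)) =
      ![1, x, y, x * y, y ^ 2] := by
    funext j
    fin_cases j <;> simp [stdMonomial, x, y]
  rw [hstd]
  refine Submodule.span_eq_top_of_mul_mem (adjoin_range_mk_X_eq_top _)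
    (Submodule.subset_span ⟨0, rfl⟩) ?_
  have mem j : ![1, x, y, x * y, y ^ 2] j ∈ Submodule.span K (Set.range ![1, x, y, x * y, y ^ 2]) :=
    Submodule.subset_span ⟨j, rfl⟩
  rintro _ ⟨n, rfl⟩ _ ⟨j, rfl⟩
  fin_cases n <;> fin_cases j
  · show x * 1 ∈ _; rw [mul_one]; exact mem 1
  · show x * x ∈ _; rw [show x * x = -y ^ 2 by linear_combination hsq]; exact neg_mem (mem 4)
  · show x * y ∈ _; exact mem 3
  · show x * (x * y) ∈ _; rw [show x * (x * y) = 0 by linear_combination hx2y]; exact zero_mem _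
  · show x * y ^ 2 ∈ _; rw [show x * y ^ 2 = 0 by linear_combination x * hsq - hx3]
    exact zero_mem _
  · show y * 1 ∈ _; rw [mul_one]; exact mem 2
  · show y * x ∈ _; rw [mul_comm y x]; exact mem 3
  · show y * y ∈ _; rw [← sq]; exact mem 4
  · show y * (x * y) ∈ _; rw [show y * (x * y) = 0 by linear_combination x * hsq - hx3]
    exact zero_mem _
  · show y * y ^ 2 ∈ _; rw [show y * y ^ 2 = 0 by linear_combination y * hsq - hx2y]
    exact zero_mem _

theorem finrank_quotient_eq_five [Nontrivial K] :
    Module.finrank K (MvPolynomial (Fin 2) K ⧸ ideal K) = 5 := by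
  simpa using Module.finrank_eq_card_basis
    (Module.Basis.mk linearIndependent_mk_stdMonomial span_mk_stdMonomial_eq_top.ge)

end SquareSum

theorem stmt_13 :
    Module.finrank ℂ
      (MvPolynomial (Fin 2) ℂ ⧸
        (Ideal.span {(X 0 : MvPolynomial (Fin 2) ℂ) ^ 2 + X 1 ^ 2, X 0 ^ 3, X 0 ^ 2 * X 1} :
          Ideal (MvPolynomial (Fin 2) ℂ))) = 5 :=
  SquareSum.finrank_quotient_eq_five
end
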